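/- Let 𝒜 : {0,1}^m → ℝ^{w×w} be any function into w×w real matrices and let g : {0,1}^n × {0,1}^d → {0,1}^m be an (ε,δ)-averaging sampler. Then with probability at least 1 − w²·δ over a uniform x ∈ {0,1}^n, ‖E_{s∈{0,1}^d}[𝒜(g(x,s))]‖ ≤ ‖𝒜‖ + 2·w·μ(𝒜)·ε. -/

import Mathlib

/-!
Every entry of `𝒜` lies in `[-μ(𝒜), μ(𝒜)]`, so after an affine rescaling onto `[0, 1]` each of
the `w²` entries is a test function for the sampler. By the union bound, for all but a `w²δ`
fraction of seeds `x` every entry of `E_s[𝒜(g(x,s))]` is within `2μ(𝒜)ε` of the corresponding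
entry of `⟨𝒜⟩`, and a `w × w` matrix whose entries are bounded by `c` has ℓ∞ operator norm at
most `w c`.
-/

attribute [local instance] Matrix.linftyOpNormedRing

/-- The uniform average `E_{t∈T}[f t]` over a finite type `T`. -/
noncomputable def expectation {T : Type*} [Fintype T] (f : T → ℝ) : ℝ :=
  (∑ t, f t) / (Fintype.card T : ℝ)

/-- The uniform average `⟨𝒜⟩ = E_{t∈T}[𝒜 t]` of a matrix-valued function. -/
noncomputable def mexpect {T : Type*} [Fintype T] {w : ℕ}
    (A : T → Matrix (Fin w) (Fin w) ℝ) : Matrix (Fin w) (Fin w) ℝ :=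
  (Fintype.card T : ℝ)⁻¹ • ∑ t, A t

/-- The weight `μ(𝒜) = max_{t∈T} ‖𝒜 t‖` (ℓ∞ operator norm). -/
noncomputable def weight {T : Type*} [Fintype T] [Nonempty T] {w : ℕ}
    (A : T → Matrix (Fin w) (Fin w) ℝ) : ℝ :=
  Finset.univ.sup' Finset.univ_nonempty (fun t => ‖A t‖)

/-- `g : X × S → T` is an `(ε,δ)`-averaging sampler. -/
def IsAvgSampler {X S T : Type*} [Fintype X] [Fintype S] [Fintype T]
    (ε δ : ℝ) (g : X → S → T) : Prop :=
  ∀ f : T → ℝ, (∀ t, f t ∈ Set.Icc (0 : ℝ) 1) →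
    (1 - δ) * (Fintype.card X : ℝ) ≤
      ((Finset.univ.filter fun x : X =>
        |expectation (fun s => f (g x s)) - expectation f| ≤ ε).card : ℝ)

open Finset

namespace Matrix

variable {m n α : Type*} [Fintype m] [Fintype n] [SeminormedAddCommGroup α]

attribute [local instance] Matrix.linftyOpSeminormedAddCommGroup

theorem norm_apply_le_linfty_opNorm (A : Matrix m n α) (i : m) (j : n) : ‖A i j‖ ≤ ‖A‖ := by
  rw [← coe_nnnorm, ← coe_nnnorm, linfty_opNNNorm_def, NNReal.coe_le_coe]
  exact (single_le_sum (fun k _ => zero_le) (mem_univ j)).trans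
    (le_sup (f := fun i => ∑ j, ‖A i j‖₊) (mem_univ i))

theorem linfty_opNorm_le_of_norm_apply_le (A : Matrix n n α) {c : ℝ}
    (h : ∀ i j, ‖A i j‖ ≤ c) : ‖A‖ ≤ Fintype.card n * c := by
  rcases isEmpty_or_nonempty n with _ | ⟨⟨i⟩⟩
  · simp [Subsingleton.elim A 0]
  lift c to NNReal using (norm_nonneg _).trans (h i i)
  rw [← coe_nnnorm, linfty_opNNNorm_def, ← NNReal.coe_natCast, ← NNReal.coe_mul,
    NNReal.coe_le_coe]
  exact Finset.sup_le fun i _ => by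
    simpa using sum_le_sum fun j (_ : j ∈ univ) => (show ‖A i j‖₊ ≤ c from h i j)

end Matrix

theorem card_filter_forall_ge {X ι : Type*} [Fintype X] [Fintype ι] (P : ι → X → Prop)
    [∀ i, DecidablePred (P i)] (δ : ℝ)
    (h : ∀ i, (1 - δ) * Fintype.card X ≤ #(univ.filter (P i))) :
    (1 - Fintype.card ι * δ) * Fintype.card X ≤ #(univ.filter fun x => ∀ i, P i x) := by
  classical
  have hsplit (Q : X → Prop) [DecidablePred Q] :
      (#(univ.filter Q) : ℝ) + #(univ.filter fun x => ¬ Q x) = Fintype.card X := by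
    exact_mod_cast card_filter_add_card_filter_not (s := univ) Q
  have hunion : #(univ.filter fun x => ¬ ∀ i, P i x) ≤ ∑ i, #(univ.filter fun x => ¬ P i x) := by
    rw [show (univ.filter fun x => ¬ ∀ i, P i x) =
        univ.biUnion fun i => univ.filter fun x => ¬ P i x by ext x; simp [not_forall]]
    exact card_biUnion_le
  have hbad : (#(univ.filter fun x => ¬ ∀ i, P i x) : ℝ) ≤ Fintype.card ι * (δ * Fintype.card X) :=
    calc (#(univ.filter fun x => ¬ ∀ i, P i x) : ℝ)
        ≤ ∑ i, (#(univ.filter fun x => ¬ P i x) : ℝ) := by exact_mod_cast hunion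
      _ ≤ ∑ _i : ι, δ * Fintype.card X := sum_le_sum fun i _ => by linarith [h i, hsplit (P i)]
      _ = _ := by simp
  linarith [hsplit fun x => ∀ i, P i x]

theorem expectation_add_const_div {T : Type*} [Fintype T] [Nonempty T] (h : T → ℝ) (a b : ℝ) :
    expectation (fun t => (h t + a) / b) = (expectation h + a) / b := by
  have hcard : (Fintype.card T : ℝ) ≠ 0 := by exact_mod_cast Fintype.card_ne_zero
  simp only [expectation, ← sum_div, sum_add_distrib, sum_const, card_univ, nsmul_eq_mul]
  field_simp

theorem mexpect_apply {T : Type*} [Fintype T] {w : ℕ} (A : T → Matrix (Fin w) (Fin w) ℝ)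
    (i j : Fin w) : mexpect A i j = expectation (fun t => A t i j) := by
  simp [mexpect, expectation, Matrix.sum_apply, div_eq_inv_mul]

section Weight

variable {T : Type*} [Fintype T] [Nonempty T] {w : ℕ} (A : T → Matrix (Fin w) (Fin w) ℝ)

theorem norm_le_weight (t : T) : ‖A t‖ ≤ weight A :=
  le_sup' (fun t => ‖A t‖) (mem_univ t)

theorem weight_nonneg : 0 ≤ weight A :=
  (norm_nonneg _).trans (norm_le_weight A (Classical.arbitrary T))

/-- When `weight A = 0`, division by zero makes this the constant `0`. -/
noncomputable def rescaledEntry (i j : Fin w) (t : T) : ℝ :=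
  (A t i j + weight A) / (2 * weight A)

theorem rescaledEntry_mem_Icc (i j : Fin w) (t : T) : rescaledEntry A i j t ∈ Set.Icc 0 1 := by
  rcases (weight_nonneg A).eq_or_lt with h0 | hpos
  · simp [rescaledEntry, ← h0]
  have hentry :=
    abs_le.mp ((Matrix.norm_apply_le_linfty_opNorm (A t) i j).trans (norm_le_weight A t))
  exact ⟨div_nonneg (by linarith) (by linarith), (div_le_one (by linarith)).mpr (by linarith)⟩

theorem expectation_rescaledEntry_comp {S : Type*} [Fintype S] [Nonempty S] (φ : S → T)
    (i j : Fin w) :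
    expectation (fun s => rescaledEntry A i j (φ s)) =
      (mexpect (fun s => A (φ s)) i j + weight A) / (2 * weight A) := by
  rw [mexpect_apply]
  exact expectation_add_const_div _ _ _

theorem abs_mexpect_comp_apply_sub_le {S : Type*} [Fintype S] [Nonempty S] (φ : S → T)
    (i j : Fin w) {ε : ℝ}
    (h : |expectation (fun s => rescaledEntry A i j (φ s)) -
      expectation (rescaledEntry A i j)| ≤ ε) :
    |mexpect (fun s => A (φ s)) i j - mexpect A i j| ≤ 2 * weight A * ε := by
  rcases (weight_nonneg A).eq_or_lt with h0 | hpos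
  · have hA : ∀ t, A t = 0 := fun t => norm_le_zero_iff.mp (h0 ▸ norm_le_weight A t)
    simp [mexpect, hA, ← h0]
  have hM : expectation (rescaledEntry A i j) = (mexpect A i j + weight A) / (2 * weight A) :=
    expectation_rescaledEntry_comp A id i j
  rw [expectation_rescaledEntry_comp, hM, div_sub_div_same, add_sub_add_right_eq_sub, abs_div,
    abs_of_pos (by linarith : (0 : ℝ) < 2 * weight A), div_le_iff₀ (by linarith)] at h
  linarith

theorem norm_mexpect_comp_le {S : Type*} [Fintype S] [Nonempty S] (φ : S → T) {ε : ℝ}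
    (h : ∀ i j,
      |expectation (fun s => rescaledEntry A i j (φ s)) - expectation (rescaledEntry A i j)| ≤ ε) :
    ‖mexpect (fun s => A (φ s))‖ ≤ ‖mexpect A‖ + 2 * w * weight A * ε := by
  have hdiff : ‖mexpect (fun s => A (φ s)) - mexpect A‖ ≤ w * (2 * weight A * ε) := by
    simpa using Matrix.linfty_opNorm_le_of_norm_apply_le _ fun i j =>
      (abs_mexpect_comp_apply_sub_le A φ i j (h i j))
  calc ‖mexpect (fun s => A (φ s))‖
      ≤ ‖mexpect A‖ + ‖mexpect (fun s => A (φ s)) - mexpect A‖ := norm_le_insert' _ _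
    _ ≤ ‖mexpect A‖ + 2 * w * weight A * ε := by linarith

end Weight

/-- For any matrix-valued `𝒜 : {0,1}^m → ℝ^{w×w}` and `(ε,δ)`-averaging
sampler `g`, with probability at least `1 − w²δ` over uniform `x`,
`‖E_s[𝒜(g(x,s))]‖ ≤ ‖𝒜‖ + 2·w·μ(𝒜)·ε`. -/
theorem stmt_5 {n d m w : ℕ} (ε δ : ℝ)
    (𝒜 : (Fin m → Bool) → Matrix (Fin w) (Fin w) ℝ)
    (g : (Fin n → Bool) → (Fin d → Bool) → (Fin m → Bool))
    (hg : IsAvgSampler ε δ g) :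
    (1 - (w : ℝ) ^ 2 * δ) * (Fintype.card (Fin n → Bool) : ℝ) ≤
      ((Finset.univ.filter fun x : Fin n → Bool =>
        ‖mexpect (fun s => 𝒜 (g x s))‖ ≤ ‖mexpect 𝒜‖ + 2 * w * weight 𝒜 * ε).card : ℝ) := by
  calc (1 - (w : ℝ) ^ 2 * δ) * (Fintype.card (Fin n → Bool) : ℝ)
      = (1 - Fintype.card (Fin w × Fin w) * δ) * Fintype.card (Fin n → Bool) := by simp [sq]
    _ ≤ #(univ.filter fun x => ∀ ij : Fin w × Fin w,
          |expectation (fun s => rescaledEntry 𝒜 ij.1 ij.2 (g x s)) -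
            expectation (rescaledEntry 𝒜 ij.1 ij.2)| ≤ ε) :=
      card_filter_forall_ge _ δ fun ij => hg _ (rescaledEntry_mem_Icc 𝒜 ij.1 ij.2)
    _ ≤ _ := by
      refine Nat.cast_le.mpr (card_le_card (monotone_filter_right _ fun x _ hx => ?_))
      exact norm_mexpect_comp_le 𝒜 (g x) fun i j => hx (i, j)
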